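/- arXiv:2312.02999 — 2 statements merged into one kernel-verified Lean document; each statement's English description precedes it below -/
import Mathlib

section
/- Let b > 1 be a real number and T a natural number. If α is a random variable uniformly distributed on the interval (0,1) and i = ⌊(T+1) · log_b(α(b-1)+1)⌋, then for every integer t with 0 ≤ t ≤ T, the probability that i = t equals P(t) = (b^{(t+1)/(T+1)} - b^{t/(T+1)})/(b-1). In other words, the distribution of the selected time slice i conforms to the suboptimal geometric distribution P. -/
open Real MeasureTheory

/-- If `α` is uniform on `(0,1)` and `i = ⌊(T+1) · log_b(α(b-1)+1)⌋`, then for each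
`0 ≤ t ≤ T` the probability that `i = t` equals `P(t) = (b^((t+1)/(T+1)) - b^(t/(T+1)))/(b-1)`. -/
theorem backoff_slice_prob_eq (b : ℝ) (hb : 1 < b) (T : ℕ) (t : ℤ) (ht0 : 0 ≤ t)
    (htT : t ≤ (T : ℤ)) :
    volume {α : ℝ | α ∈ Set.Ioo (0:ℝ) 1 ∧
        ⌊((T : ℝ) + 1) * Real.logb b (α * (b - 1) + 1)⌋ = t} =
      ENNReal.ofReal
        ((b ^ (((t : ℝ) + 1) / ((T : ℝ) + 1)) - b ^ ((t : ℝ) / ((T : ℝ) + 1))) / (b - 1)) := by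
  have hb0 : (0:ℝ) < b - 1 := by linarith
  have hT : (0:ℝ) < (T:ℝ) + 1 := by positivity
  set x₀ : ℝ := (t:ℝ) / ((T:ℝ)+1) with hx₀
  set x₁ : ℝ := ((t:ℝ)+1) / ((T:ℝ)+1) with hx₁
  set lo : ℝ := (b ^ x₀ - 1)/(b-1) with hlo
  set hi : ℝ := (b ^ x₁ - 1)/(b-1) with hhi
  have ht0' : (0:ℝ) ≤ (t:ℝ) := by exact_mod_cast ht0
  have htT' : (t:ℝ) ≤ (T:ℝ) := by exact_mod_cast htT
  have hx0nn : 0 ≤ x₀ := by positivity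
  have hx11 : x₁ ≤ 1 := by rw [hx₁, div_le_one hT]; linarith
  have hB0 : 1 ≤ b ^ x₀ := Real.one_le_rpow hb.le hx0nn
  have hB1 : b ^ x₁ ≤ b := by
    calc b ^ x₁ ≤ b ^ (1:ℝ) := Real.rpow_le_rpow_of_exponent_le hb.le hx11
    _ = b := Real.rpow_one b
  have hx01 : x₀ < x₁ := by
    rw [hx₀, hx₁, div_lt_div_iff_of_pos_right hT]; linarith
  have hBB : b ^ x₀ < b ^ x₁ := (Real.rpow_lt_rpow_left_iff hb).mpr hx01
  have hlonn : 0 ≤ lo := by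
    rw [hlo]
    apply div_nonneg _ hb0.le
    linarith
  have hhi1 : hi ≤ 1 := by
    rw [hhi, div_le_one hb0]; linarith
  have hlohi : lo < hi := by
    rw [hlo, hhi, div_lt_div_iff_of_pos_right hb0]; linarith
  have key : ∀ α : ℝ, (0:ℝ) < α * (b-1) + 1 →
      ((⌊((T:ℝ)+1) * Real.logb b (α*(b-1)+1)⌋ = t) ↔ lo ≤ α ∧ α < hi) := by
    intro α hy
    rw [Int.floor_eq_iff, mul_comm ((T:ℝ)+1)]
    constructor
    · rintro ⟨h1, h2⟩
      rw [← div_le_iff₀ hT] at h1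
      rw [← lt_div_iff₀ hT] at h2
      rw [← hx₀, Real.le_logb_iff_rpow_le hb hy] at h1
      rw [show ((t:ℝ)+1)/((T:ℝ)+1) = x₁ from rfl, Real.logb_lt_iff_lt_rpow hb hy] at h2
      constructor
      · rw [hlo, div_le_iff₀ hb0]; linarith
      · rw [hhi, lt_div_iff₀ hb0]; linarith
    · rintro ⟨h1, h2⟩
      rw [hlo, div_le_iff₀ hb0] at h1
      rw [hhi, lt_div_iff₀ hb0] at h2
      have g1 : b ^ x₀ ≤ α*(b-1)+1 := by linarith
      have g2 : α*(b-1)+1 < b ^ x₁ := by linarith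
      rw [← Real.le_logb_iff_rpow_le hb hy] at g1
      rw [← Real.logb_lt_iff_lt_rpow hb hy] at g2
      rw [hx₀, div_le_iff₀ hT] at g1
      rw [hx₁, lt_div_iff₀ hT] at g2
      exact ⟨g1, g2⟩
  set S := {α : ℝ | α ∈ Set.Ioo (0:ℝ) 1 ∧
      ⌊((T : ℝ) + 1) * Real.logb b (α * (b - 1) + 1)⌋ = t} with hS
  have hsub1 : S ⊆ Set.Ico lo hi := by
    rintro α ⟨⟨h0, h1⟩, hf⟩
    have hy : (0:ℝ) < α * (b-1) + 1 := by nlinarith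
    exact (key α hy).mp hf
  have hsub2 : Set.Ioo lo hi ⊆ S := by
    rintro α ⟨h0, h1⟩
    have hα0 : 0 < α := lt_of_le_of_lt hlonn h0
    have hα1 : α < 1 := lt_of_lt_of_le h1 hhi1
    have hy : (0:ℝ) < α * (b-1) + 1 := by nlinarith
    exact ⟨⟨hα0, hα1⟩, (key α hy).mpr ⟨h0.le, h1⟩⟩
  have hv : volume S = ENNReal.ofReal (hi - lo) := by
    apply le_antisymm
    · calc volume S ≤ volume (Set.Ico lo hi) := measure_mono hsub1
      _ = ENNReal.ofReal (hi - lo) := Real.volume_Ico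
    · calc ENNReal.ofReal (hi - lo) = volume (Set.Ioo lo hi) := Real.volume_Ioo.symm
      _ ≤ volume S := measure_mono hsub2
  rw [hv]
  congr 1
  rw [hhi, hlo, div_sub_div_same]
  ring_nf
end

section
/- Let b > 1 be a real number and T a natural number. If α is a random variable uniformly distributed on the interval (0,1) and i = ⌊(T+1) · log_b(α(b-1)+1)⌋, then for every integer t with 0 ≤ t ≤ T, the probability that i ≤ t equals (b^{(t+1)/(T+1)} - 1)/(b-1). -/
open Real MeasureTheory

/-- If `α` is uniform on `(0,1)` and `i = ⌊(T+1) · log_b(α(b-1)+1)⌋`, then for each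
`0 ≤ t ≤ T` the probability that `i ≤ t` equals `(b^((t+1)/(T+1)) - 1)/(b-1)`. -/
theorem backoff_slice_cdf (b : ℝ) (hb : 1 < b) (T : ℕ) (t : ℤ) (ht0 : 0 ≤ t)
    (htT : t ≤ (T : ℤ)) :
    volume {α : ℝ | α ∈ Set.Ioo (0:ℝ) 1 ∧
        ⌊((T : ℝ) + 1) * Real.logb b (α * (b - 1) + 1)⌋ ≤ t} =
      ENNReal.ofReal ((b ^ (((t : ℝ) + 1) / ((T : ℝ) + 1)) - 1) / (b - 1)) := by
  have hb0 : (0:ℝ) < b := lt_trans one_pos hb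
  have hb1 : (0:ℝ) < b - 1 := by linarith
  have hT1 : (0:ℝ) < (T:ℝ) + 1 := by positivity
  set s : ℝ := ((t : ℝ) + 1) / ((T : ℝ) + 1) with hs
  have hs_pos : 0 < s := by
    apply div_pos _ hT1
    have : (0:ℝ) ≤ (t:ℝ) := by exact_mod_cast ht0
    linarith
  have hs_le : s ≤ 1 := by
    rw [hs, div_le_one hT1]
    have : (t:ℝ) ≤ (T:ℝ) := by exact_mod_cast htT
    linarith
  set c : ℝ := (b ^ s - 1) / (b - 1) with hc
  have hbs1 : 1 < b ^ s := by
    calc (1:ℝ) = b ^ (0:ℝ) := (Real.rpow_zero b).symm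
    _ < b ^ s := Real.rpow_lt_rpow_left_iff hb |>.mpr hs_pos
  have hc_pos : 0 < c := div_pos (by linarith) hb1
  have hc_le : c ≤ 1 := by
    rw [hc, div_le_one hb1]
    have : b ^ s ≤ b ^ (1:ℝ) := Real.rpow_le_rpow_left_iff hb |>.mpr hs_le
    rw [Real.rpow_one] at this
    linarith
  have hset : {α : ℝ | α ∈ Set.Ioo (0:ℝ) 1 ∧
      ⌊((T : ℝ) + 1) * Real.logb b (α * (b - 1) + 1)⌋ ≤ t} = Set.Ioo 0 c := by
    ext α
    simp only [Set.mem_setOf_eq, Set.mem_Ioo]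
    constructor
    · rintro ⟨⟨h0, h1⟩, hfl⟩
      refine ⟨h0, ?_⟩
      rw [Int.floor_le_iff] at hfl
      have hy : 0 < α * (b - 1) + 1 := by nlinarith
      have hmul : Real.logb b (α * (b - 1) + 1) < s := by
        rw [hs, lt_div_iff₀ hT1]
        push_cast at hfl ⊢
        linarith [mul_comm ((T:ℝ)+1) (Real.logb b (α * (b - 1) + 1))]
      have : α * (b - 1) + 1 < b ^ s :=
        (Real.lt_rpow_iff_log_lt hy hb0).mpr
          (by rwa [Real.logb, div_lt_iff₀ (Real.log_pos hb)] at hmul)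
      rw [hc, lt_div_iff₀ hb1]
      linarith
    · rintro ⟨h0, h1⟩
      have h1' : α < 1 := lt_of_lt_of_le h1 hc_le
      refine ⟨⟨h0, h1'⟩, ?_⟩
      rw [Int.floor_le_iff]
      have hy : 0 < α * (b - 1) + 1 := by nlinarith
      have hlt : α * (b - 1) + 1 < b ^ s := by
        rw [hc, lt_div_iff₀ hb1] at h1
        linarith
      have hmul : Real.logb b (α * (b - 1) + 1) < s := by
        rw [Real.logb, div_lt_iff₀ (Real.log_pos hb)]
        exact (Real.lt_rpow_iff_log_lt hy hb0).mp hlt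
      have := (mul_lt_mul_iff_right₀ hT1).mpr hmul
      rw [hs] at this
      rw [mul_div_cancel₀ _ (ne_of_gt hT1)] at this
      push_cast
      linarith
  rw [hset, Real.volume_Ioo, sub_zero]
end
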